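/- With γ'' = (1/(2n²(n-1))) Σ_{(j,k) distinct} Σ_{(r,s) distinct} |p_{j,r}-p_{j,s}| |p_{k,r}-p_{k,s}| and γ''' = (1/(4n²(n-1))) Σ_{(j,k) distinct} Σ_{(r,s) distinct} (|p_{j,r}-p_{j,s}| - |p_{k,r}-p_{k,s}|)², one has γ'' + γ''' = (1/n) Σ_{(j,r) ∈ [n]²} p_{j,r}² − Σ_{j∈[n]} (p̄_{j,·})², where p̄_{j,·} = (1/n) Σ_{r=1}^n p_{j,r}. -/
import Mathlib

open Finset

theorem gamma''_add_gamma'''_eq (n : ℕ) (hn : 2 ≤ n) (p : Fin n → Fin n → ℝ)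
    (hp : ∀ j r, p j r ∈ Set.Icc (0:ℝ) 1) :
    (1 / (2 * (n:ℝ)^2 * ((n:ℝ) - 1))) *
      ∑ j : Fin n, ∑ k : Fin n, ∑ r : Fin n, ∑ s : Fin n,
        (if j ≠ k ∧ r ≠ s then |p j r - p j s| * |p k r - p k s| else 0)
    + (1 / (4 * (n:ℝ)^2 * ((n:ℝ) - 1))) *
      ∑ j : Fin n, ∑ k : Fin n, ∑ r : Fin n, ∑ s : Fin n,
        (if j ≠ k ∧ r ≠ s then (|p j r - p j s| - |p k r - p k s|)^2 else 0)
    = (n:ℝ)⁻¹ * (∑ j : Fin n, ∑ r : Fin n, (p j r)^2)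
      - ∑ j : Fin n, ((n:ℝ)⁻¹ * ∑ r : Fin n, p j r)^2 := by
  have hn1 : (2:ℝ) ≤ (n:ℝ) := by exact_mod_cast hn
  have hne : (n:ℝ) ≠ 0 := by linarith
  have hne1 : (n:ℝ) - 1 ≠ 0 := by linarith
  -- Step 1: combine the two sums pointwise
  have step1 :
      (1 / (2 * (n:ℝ)^2 * ((n:ℝ) - 1))) *
        ∑ j : Fin n, ∑ k : Fin n, ∑ r : Fin n, ∑ s : Fin n,
          (if j ≠ k ∧ r ≠ s then |p j r - p j s| * |p k r - p k s| else 0)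
      + (1 / (4 * (n:ℝ)^2 * ((n:ℝ) - 1))) *
        ∑ j : Fin n, ∑ k : Fin n, ∑ r : Fin n, ∑ s : Fin n,
          (if j ≠ k ∧ r ≠ s then (|p j r - p j s| - |p k r - p k s|)^2 else 0)
      = (1 / (4 * (n:ℝ)^2 * ((n:ℝ) - 1))) *
        ∑ j : Fin n, ∑ k : Fin n, ∑ r : Fin n, ∑ s : Fin n,
          (if j ≠ k ∧ r ≠ s then (p j r - p j s)^2 + (p k r - p k s)^2 else 0) := by
    have hc : (1 / (2 * (n:ℝ)^2 * ((n:ℝ) - 1)))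
        = 2 * (1 / (4 * (n:ℝ)^2 * ((n:ℝ) - 1))) := by
      field_simp
      ring
    rw [hc]
    have key :
        2 * (∑ j : Fin n, ∑ k : Fin n, ∑ r : Fin n, ∑ s : Fin n,
            (if j ≠ k ∧ r ≠ s then |p j r - p j s| * |p k r - p k s| else 0))
        + (∑ j : Fin n, ∑ k : Fin n, ∑ r : Fin n, ∑ s : Fin n,
            (if j ≠ k ∧ r ≠ s then (|p j r - p j s| - |p k r - p k s|)^2 else 0))
        = ∑ j : Fin n, ∑ k : Fin n, ∑ r : Fin n, ∑ s : Fin n,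
            (if j ≠ k ∧ r ≠ s then (p j r - p j s)^2 + (p k r - p k s)^2 else 0) := by
      simp only [Finset.mul_sum, ← Finset.sum_add_distrib]
      refine Finset.sum_congr rfl fun j _ => Finset.sum_congr rfl fun k _ =>
        Finset.sum_congr rfl fun r _ => Finset.sum_congr rfl fun s _ => ?_
      by_cases h : j ≠ k ∧ r ≠ s
      · simp only [if_pos h]
        have e1 : |p j r - p j s|^2 = (p j r - p j s)^2 := sq_abs _
        have e2 : |p k r - p k s|^2 = (p k r - p k s)^2 := sq_abs _
        linear_combination e1 + e2
      · simp [h]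
    linear_combination (1 / (4 * (n:ℝ)^2 * ((n:ℝ) - 1))) * key
  rw [step1]
  -- Step 2: symmetrize
  have step2 :
      (∑ j : Fin n, ∑ k : Fin n, ∑ r : Fin n, ∑ s : Fin n,
          (if j ≠ k ∧ r ≠ s then (p j r - p j s)^2 + (p k r - p k s)^2 else 0))
      = 2 * ∑ j : Fin n, ∑ k : Fin n, ∑ r : Fin n, ∑ s : Fin n,
          (if j ≠ k ∧ r ≠ s then (p j r - p j s)^2 else 0) := by
    have split : ∀ j k r s : Fin n,
        (if j ≠ k ∧ r ≠ s then (p j r - p j s)^2 + (p k r - p k s)^2 else 0)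
        = (if j ≠ k ∧ r ≠ s then (p j r - p j s)^2 else 0)
          + (if j ≠ k ∧ r ≠ s then (p k r - p k s)^2 else 0) := by
      intro j k r s; by_cases h : j ≠ k ∧ r ≠ s <;> simp [h]
    simp only [split, Finset.sum_add_distrib]
    have swap :
        (∑ j : Fin n, ∑ k : Fin n, ∑ r : Fin n, ∑ s : Fin n,
            (if j ≠ k ∧ r ≠ s then (p k r - p k s)^2 else 0))
        = ∑ j : Fin n, ∑ k : Fin n, ∑ r : Fin n, ∑ s : Fin n,
            (if j ≠ k ∧ r ≠ s then (p j r - p j s)^2 else 0) := by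
      rw [Finset.sum_comm]
      refine Finset.sum_congr rfl fun j _ => Finset.sum_congr rfl fun k _ =>
        Finset.sum_congr rfl fun r _ => Finset.sum_congr rfl fun s _ => ?_
      simp [ne_comm]
    rw [swap]; ring
  rw [step2]
  -- Step 3: eliminate k and the r ≠ s condition
  have step3 :
      (∑ j : Fin n, ∑ k : Fin n, ∑ r : Fin n, ∑ s : Fin n,
          (if j ≠ k ∧ r ≠ s then (p j r - p j s)^2 else 0))
      = ((n:ℝ) - 1) * ∑ j : Fin n, ∑ r : Fin n, ∑ s : Fin n, (p j r - p j s)^2 := by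
    have pt : ∀ j k r s : Fin n,
        (if j ≠ k ∧ r ≠ s then (p j r - p j s)^2 else 0)
        = (if j ≠ k then (1:ℝ) else 0) * (p j r - p j s)^2 := by
      intro j k r s
      by_cases h1 : j ≠ k <;> by_cases h2 : r ≠ s <;>
        simp [h1, h2, not_not.mp, sub_self]
      · push_neg at h2; simp [h2]
    simp only [pt, ← Finset.mul_sum, ← Finset.sum_mul]
    have hcount : ∀ j : Fin n, (∑ k : Fin n, (if j ≠ k then (1:ℝ) else 0)) = (n:ℝ) - 1 := by
      intro j
      have h : ∀ k : Fin n, (if j ≠ k then (1:ℝ) else 0) = 1 - (if j = k then 1 else 0) := by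
        intro k; by_cases h : j = k <;> simp [h]
      simp [h, Finset.sum_sub_distrib, Finset.sum_ite_eq]
    rw [Finset.mul_sum]
    exact Finset.sum_congr rfl fun j _ => by rw [hcount j]
  rw [step3]
  -- Step 4: per-row variance identity
  have var : ∀ j : Fin n,
      ∑ r : Fin n, ∑ s : Fin n, (p j r - p j s)^2
      = 2*(n:ℝ)*(∑ r : Fin n, (p j r)^2) - 2*(∑ r : Fin n, p j r)^2 := by
    intro j
    have h : ∀ r s : Fin n, (p j r - p j s)^2
        = (p j r)^2 - 2*(p j r * p j s) + (p j s)^2 := by intros; ring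
    simp only [h, Finset.sum_add_distrib, Finset.sum_sub_distrib, ← Finset.mul_sum,
      ← Finset.sum_mul, Finset.sum_const, Finset.card_univ, Fintype.card_fin, nsmul_eq_mul]
    rw [show (∑ i : Fin n, p j i) * (∑ i : Fin n, p j i) = (∑ i : Fin n, p j i)^2 by ring]
    ring
  simp only [var]
  have final : ∀ j : Fin n,
      1/(4*(n:ℝ)^2*((n:ℝ)-1)) * (2*(((n:ℝ)-1) *
        (2*(n:ℝ)*(∑ r : Fin n, (p j r)^2) - 2*(∑ r : Fin n, p j r)^2)))
      = (n:ℝ)⁻¹ * (∑ r : Fin n, (p j r)^2) - ((n:ℝ)⁻¹ * ∑ r : Fin n, p j r)^2 := by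
    intro j; field_simp; ring
  calc 1 / (4 * (n:ℝ)^2 * ((n:ℝ) - 1)) *
      (2 * (((n:ℝ) - 1) * ∑ j : Fin n,
        (2*(n:ℝ)*(∑ r : Fin n, (p j r)^2) - 2*(∑ r : Fin n, p j r)^2)))
      = ∑ j : Fin n, 1/(4*(n:ℝ)^2*((n:ℝ)-1)) * (2*(((n:ℝ)-1) *
          (2*(n:ℝ)*(∑ r : Fin n, (p j r)^2) - 2*(∑ r : Fin n, p j r)^2))) := by
        simp only [Finset.mul_sum]
    _ = ∑ j : Fin n, ((n:ℝ)⁻¹ * (∑ r : Fin n, (p j r)^2) - ((n:ℝ)⁻¹ * ∑ r : Fin n, p j r)^2) :=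
        Finset.sum_congr rfl fun j _ => final j
    _ = (n:ℝ)⁻¹ * (∑ j : Fin n, ∑ r : Fin n, (p j r)^2)
        - ∑ j : Fin n, ((n:ℝ)⁻¹ * ∑ r : Fin n, p j r)^2 := by
        rw [Finset.sum_sub_distrib, ← Finset.mul_sum]
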